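/- arXiv:2012.07936 — 3 statements merged into one kernel-verified Lean document; each statement's English description precedes it below -/
import Mathlib

section
/- Pigeonhole robustness of AlgR: Let S_0 ⊆ S_1 ⊆ ... ⊆ S_r ⊆ V be an increasing chain of sets with the property that for every t ∈ {1,...,r}, every X' ⊆ S_{t−1} with |X'| ≤ r, and every i ∈ [m]: f_i(S_t \ X') ≥ 1 − α. Suppose moreover S_0 satisfies f_i(S_0) ≥ 1 − α for all i. Then for every X ⊆ V with |X| = r and every i ∈ [m], f_i(S_r \ X) ≥ 1 − α, i.e., S_r is (r,α)-robust. -/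
/-!
Intersect `X` with the chain: `X ∩ S 0 ⊆ X ∩ S 1 ⊆ ⋯ ⊆ X ∩ S r` has at most `r` elements at the
top, so by pigeonhole either `X` misses `S 0` or some step `X ∩ S (t+1) ⊆ S t` adds nothing.
In the first case `S 0 ⊆ S r \ X`; in the second `S (t+1) \ (X ∩ S t) ⊆ S r \ X`.
Either way monotonicity transfers the hypothesis to `S r \ X`.
-/

open Finset

namespace Finset

variable {β : Type*} {T : ℕ → Finset β} {n : ℕ}

theorem card_add_le_card_of_ssubset_succ (hT : ∀ t < n, T t ⊂ T (t + 1)) :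
    #(T 0) + n ≤ #(T n) := by
  induction n with
  | zero => rfl
  | succ n ih =>
    have hlt := card_lt_card (hT n n.lt_succ_self)
    have := ih fun t ht => hT t (ht.trans n.lt_succ_self)
    omega

theorem eq_empty_or_exists_succ_subset_of_card_le (hT : MonotoneOn T (Set.Iic n))
    (hcard : #(T n) ≤ n) : T 0 = ∅ ∨ ∃ t < n, T (t + 1) ⊆ T t := by
  by_contra! h
  obtain ⟨hne, hgrow⟩ := h
  have hlt : #(T 0) + n ≤ #(T n) := card_add_le_card_of_ssubset_succ fun t ht =>
    ssubset_of_subset_not_subset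
      (hT (Set.mem_Iic.2 ht.le) (Set.mem_Iic.2 ht) t.le_succ) (hgrow t ht)
  have := card_pos.2 hne
  omega

end Finset

theorem le_apply_sdiff_of_chain {β : Type*} [DecidableEq β] {g : Finset β → ℝ}
    (hg : Monotone g) {c : ℝ} {S : ℕ → Finset β} {r : ℕ} (hS : MonotoneOn S (Set.Iic r))
    (hstep : ∀ t < r, ∀ X' ⊆ S t, #X' ≤ r → c ≤ g (S (t + 1) \ X'))
    (hS0 : c ≤ g (S 0)) {X : Finset β} (hX : #X ≤ r) : c ≤ g (S r \ X) := by
  have hXS : MonotoneOn (fun t => X ∩ S t) (Set.Iic r) := fun s hs t ht hst =>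
    inter_subset_inter_left (hS hs ht hst)
  obtain h0 | ⟨t, ht, hsub⟩ :=
    eq_empty_or_exists_succ_subset_of_card_le hXS ((card_le_card inter_subset_left).trans hX)
  · refine hS0.trans (hg (subset_sdiff.2 ⟨hS (by simp) (by simp) r.zero_le, ?_⟩))
    rwa [disjoint_iff_inter_eq_empty, inter_comm]
  · refine (hstep t ht (X ∩ S t) inter_subset_right
      ((card_le_card inter_subset_left).trans hX)).trans (hg fun x hx => ?_)
    have hxS : S (t + 1) ⊆ S r := hS (Set.mem_Iic.2 ht) (Set.mem_Iic.2 le_rfl) ht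
    simp only [mem_sdiff, mem_inter] at hx ⊢
    exact ⟨hxS hx.1, fun hxX => hx.2 ⟨hxX, (mem_inter.1 (hsub (mem_inter.2 ⟨hxX, hx.1⟩))).2⟩⟩

theorem stmt_4_general {α : Type*} [DecidableEq α] {m : ℕ}
    (f : Fin m → Finset α → ℝ)
    (hmono : ∀ i, ∀ A B : Finset α, A ⊆ B → f i A ≤ f i B)
    (α' : ℝ)
    (r : ℕ) (V : Finset α) (S : ℕ → Finset α)
    (hchain : ∀ t, t ≤ r → ∀ s, s ≤ t → S s ⊆ S t)
    (hstep : ∀ t, 1 ≤ t → t ≤ r → ∀ X' : Finset α, X' ⊆ S (t - 1) →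
      X'.card ≤ r → ∀ i : Fin m, 1 - α' ≤ f i (S t \ X'))
    (hS0 : ∀ i : Fin m, 1 - α' ≤ f i (S 0)) :
    ∀ X : Finset α, X ⊆ V → X.card = r → ∀ i : Fin m,
      1 - α' ≤ f i (S r \ X) := by
  intro X _ hX i
  refine le_apply_sdiff_of_chain (fun A B => hmono i A B)
    (fun s _ t ht hst => hchain t ht s hst) ?_ (hS0 i) hX.le
  intro t ht X' hX' hX'r
  exact hstep (t + 1) (by omega) ht X' (by simpa using hX') hX'r i

/-- pigeonhole robustness of AlgR. -/
theorem stmt_4 {α : Type*} [Fintype α] [DecidableEq α] {m : ℕ}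
    (f : Fin m → Finset α → ℝ)
    (hmono : ∀ i, ∀ A B : Finset α, A ⊆ B → f i A ≤ f i B)
    (α' : ℝ) (hα : 0 ≤ α' ∧ α' ≤ 1)
    (r : ℕ) (V : Finset α) (S : ℕ → Finset α)
    (hchain : ∀ t, t ≤ r → ∀ s, s ≤ t → S s ⊆ S t)
    (hSV : S r ⊆ V)
    (hstep : ∀ t, 1 ≤ t → t ≤ r → ∀ X' : Finset α, X' ⊆ S (t - 1) →
      X'.card ≤ r → ∀ i : Fin m, 1 - α' ≤ f i (S t \ X'))
    (hS0 : ∀ i : Fin m, 1 - α' ≤ f i (S 0)) :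
    ∀ X : Finset α, X ⊆ V → X.card = r → ∀ i : Fin m,
      1 - α' ≤ f i (S r \ X) :=
  stmt_4_general f hmono α' r V S hchain hstep hS0
end

section
/- Correctness of the DisJoint heuristic: Let S_1, ..., S_{r+1} ⊆ V be pairwise disjoint sets such that f_i(S_j) ≥ 1 − α for all i ∈ [m] and j ∈ [r+1], and let S = S_1 ∪ ... ∪ S_{r+1}. Then for every X ⊆ V with |X| ≤ r and every i ∈ [m], f_i(S \ X) ≥ 1 − α. -/
theorem Finset.exists_disjoint_of_card_lt_card {ι β : Type*} [Fintype ι] (S : ι → Finset β)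
    (hS : Pairwise fun j k => Disjoint (S j) (S k)) (X : Finset β) (hX : X.card < Fintype.card ι) :
    ∃ j, Disjoint (S j) X := by
  by_contra! hmeet
  -- otherwise a choice of a point of `X` in each `S j` is an injection `ι → X`
  choose g hgS hgX using fun j => Finset.not_disjoint_iff.mp (hmeet j)
  have hg_inj : Set.InjOn g (Finset.univ : Finset ι) := fun j _ k _ hjk => by
    by_contra hne
    exact Finset.disjoint_left.mp (hS hne) (hgS j) (hjk ▸ hgS k)
  have := Finset.card_le_card_of_injOn g (fun j _ => hgX j) hg_inj
  rw [Finset.card_univ] at this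
  omega

theorem stmt_5_general {α : Type*} [DecidableEq α] {m r : ℕ}
    (f : Fin m → Finset α → ℝ)
    (hmono : ∀ i, ∀ A B : Finset α, A ⊆ B → f i A ≤ f i B)
    (α' : ℝ)
    (V : Finset α) (S : Fin (r + 1) → Finset α)
    (hdisj : ∀ j k : Fin (r + 1), j ≠ k → Disjoint (S j) (S k))
    (hsat : ∀ (i : Fin m) (j : Fin (r + 1)), 1 - α' ≤ f i (S j)) :
    ∀ X : Finset α, X ⊆ V → X.card ≤ r → ∀ i : Fin m,
      1 - α' ≤ f i ((Finset.univ.biUnion S) \ X) := by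
  intro X _ hXcard i
  obtain ⟨j, hjX⟩ := Finset.exists_disjoint_of_card_lt_card S hdisj X (by simpa [Nat.lt_succ_iff])
  have hj_sub : S j ⊆ Finset.univ.biUnion S \ X :=
    Finset.subset_sdiff.mpr ⟨Finset.subset_biUnion_of_mem S (Finset.mem_univ j), hjX⟩
  exact (hsat i j).trans (hmono i _ _ hj_sub)

/-- correctness of the DisJoint heuristic. -/
theorem stmt_5 {α : Type*} [Fintype α] [DecidableEq α] {m r : ℕ}
    (f : Fin m → Finset α → ℝ)
    (hmono : ∀ i, ∀ A B : Finset α, A ⊆ B → f i A ≤ f i B)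
    (α' : ℝ) (hα : 0 ≤ α' ∧ α' ≤ 1)
    (V : Finset α) (S : Fin (r + 1) → Finset α)
    (hSV : ∀ j, S j ⊆ V)
    (hdisj : ∀ j k : Fin (r + 1), j ≠ k → Disjoint (S j) (S k))
    (hsat : ∀ (i : Fin m) (j : Fin (r + 1)), 1 - α' ≤ f i (S j)) :
    ∀ X : Finset α, X ⊆ V → X.card ≤ r → ∀ i : Fin m,
      1 - α' ≤ f i ((Finset.univ.biUnion S) \ X) :=
  stmt_5_general f hmono α' V S hdisj hsat
end

section
/- Expected one-step decay for RandGr (Lemma 2 of the paper): Let f_1,...,f_m : 2^V → [0,1] be monotone submodular, let ℱ_t be a set of unsatisfied functions, and S_t a current set such that there exists O with |O| = k and f(S_t ∪ O) = 1 for all f ∈ ℱ_t. Let F be a uniformly random subset of ℱ_t of size |ℱ_t|/2, and let e_t maximize Σ_{f ∈ F} Δ_e f(S_t) over e ∈ V \ S_t; set S_{t+1} = S_t ∪ {e_t}. Then E[Σ_{f ∈ ℱ_t} (1 − f(S_{t+1}))] ≤ (1 − 1/(2k)) Σ_{f ∈ ℱ_t} (1 − f(S_t)). -/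
/-!
For each half `F`, submodularity splits the deficit `∑_{i ∈ F} (1 - f i S)` over the at most
`k` elements of `O \ S`, so the greedy element gains at least a `1/k` fraction of the deficit
of `F`. Pairing each half with its complement shows that a uniform half carries exactly half
of the total deficit of `ℱ`; monotonicity makes the gains outside `F` nonnegative.
-/

open Finset

section

variable {α : Type*} [DecidableEq α]

def HasDiminishingReturns (g : Finset α → ℝ) : Prop :=
  ∀ (A B : Finset α) (e : α), A ⊆ B → e ∉ B → g (insert e B) - g B ≤ g (insert e A) - g A

theorem HasDiminishingReturns.sub_le_sum_marginal {g : Finset α → ℝ}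
    (hg : HasDiminishingReturns g) {S D : Finset α} (hD : Disjoint D S) :
    g (S ∪ D) - g S ≤ ∑ o ∈ D, (g (insert o S) - g S) := by
  induction D using Finset.induction_on with
  | empty => simp
  | insert a D ha ih =>
    obtain ⟨haS, hDS⟩ := disjoint_insert_left.mp hD
    have haSD : a ∉ S ∪ D := by simp [haS, ha]
    have hstep := hg S (S ∪ D) a subset_union_left haSD
    rw [union_insert, sum_insert ha]
    linarith [ih hDS]

variable {ι : Type*}

theorem sum_deficit_div_card_le_sum_marginal (F : Finset ι) (g : ι → Finset α → ℝ)
    (hmono : ∀ i, Monotone (g i)) (hsub : ∀ i, HasDiminishingReturns (g i))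
    {S O : Finset α} (hcover : ∀ i ∈ F, g i (S ∪ O) = 1) {x : α}
    (hmax : ∀ o ∈ O \ S, ∑ i ∈ F, (g i (insert o S) - g i S) ≤
      ∑ i ∈ F, (g i (insert x S) - g i S)) :
    (∑ i ∈ F, (1 - g i S)) / #O ≤ ∑ i ∈ F, (g i (insert x S) - g i S) := by
  set G := ∑ i ∈ F, (g i (insert x S) - g i S)
  have hG : 0 ≤ G := sum_nonneg fun i _ ↦ sub_nonneg.mpr (hmono i (subset_insert x S))
  have hcard : (#(O \ S) : ℝ) ≤ #O := by exact_mod_cast card_le_card sdiff_subset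
  refine div_le_of_le_mul₀ (Nat.cast_nonneg _) hG ?_
  calc ∑ i ∈ F, (1 - g i S)
      ≤ ∑ i ∈ F, ∑ o ∈ O \ S, (g i (insert o S) - g i S) := by
        refine sum_le_sum fun i hi ↦ ?_
        have := (hsub i).sub_le_sum_marginal (sdiff_disjoint : Disjoint (O \ S) S)
        rwa [union_sdiff_self_eq_union, hcover i hi] at this
    _ = ∑ o ∈ O \ S, ∑ i ∈ F, (g i (insert o S) - g i S) := sum_comm
    _ ≤ ∑ _o ∈ O \ S, G := sum_le_sum hmax
    _ = G * #(O \ S) := by rw [sum_const, nsmul_eq_mul, mul_comm]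
    _ ≤ G * #O := mul_le_mul_of_nonneg_left hcard hG

theorem sum_deficit_insert_le_of_greedy {s F : Finset ι} (hFs : F ⊆ s) (g : ι → Finset α → ℝ)
    (hmono : ∀ i, Monotone (g i)) (hsub : ∀ i, HasDiminishingReturns (g i))
    {S O : Finset α} (hcover : ∀ i ∈ F, g i (S ∪ O) = 1) {x : α}
    (hmax : ∀ o ∈ O \ S, ∑ i ∈ F, (g i (insert o S) - g i S) ≤
      ∑ i ∈ F, (g i (insert x S) - g i S)) :
    ∑ i ∈ s, (1 - g i (insert x S)) ≤
      ∑ i ∈ s, (1 - g i S) - (∑ i ∈ F, (1 - g i S)) / #O := by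
  have hgreedy := sum_deficit_div_card_le_sum_marginal F g hmono hsub hcover hmax
  have hgain : ∑ i ∈ F, (g i (insert x S) - g i S) ≤ ∑ i ∈ s, (g i (insert x S) - g i S) :=
    sum_le_sum_of_subset_of_nonneg hFs fun i _ _ ↦ sub_nonneg.mpr (hmono i (subset_insert x S))
  have hsplit : ∑ i ∈ s, (1 - g i (insert x S)) =
      ∑ i ∈ s, (1 - g i S) - ∑ i ∈ s, (g i (insert x S) - g i S) := by
    rw [← sum_sub_distrib]
    exact sum_congr rfl fun i _ ↦ by ring
  linarith

theorem sdiff_mem_powersetCard_of_card_eq_two_mul [DecidableEq ι] {s F : Finset ι} {c : ℕ}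
    (hs : #s = 2 * c) (hF : F ∈ powersetCard c s) : s \ F ∈ powersetCard c s := by
  obtain ⟨hFs, hFc⟩ := mem_powersetCard.mp hF
  refine mem_powersetCard.mpr ⟨sdiff_subset, ?_⟩
  rw [card_sdiff_of_subset hFs]
  omega

theorem two_nsmul_sum_powersetCard_sum [DecidableEq ι] {M : Type*} [AddCommMonoid M]
    {s : Finset ι} {c : ℕ} (hs : #s = 2 * c) (w : ι → M) :
    2 • ∑ F ∈ powersetCard c s, ∑ i ∈ F, w i = #(powersetCard c s) • ∑ i ∈ s, w i := by
  have hcompl : ∑ F ∈ powersetCard c s, ∑ i ∈ s \ F, w i =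
      ∑ F ∈ powersetCard c s, ∑ i ∈ F, w i :=
    sum_nbij' (s \ ·) (s \ ·) (fun _ ↦ sdiff_mem_powersetCard_of_card_eq_two_mul hs)
      (fun _ ↦ sdiff_mem_powersetCard_of_card_eq_two_mul hs)
      (fun _ hF ↦ Finset.sdiff_sdiff_eq_self (mem_powersetCard.mp hF).1)
      (fun _ hF ↦ Finset.sdiff_sdiff_eq_self (mem_powersetCard.mp hF).1) fun _ _ ↦ rfl
  calc 2 • ∑ F ∈ powersetCard c s, ∑ i ∈ F, w i
      = ∑ F ∈ powersetCard c s, (∑ i ∈ s \ F, w i + ∑ i ∈ F, w i) := by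
        rw [sum_add_distrib, hcompl, two_nsmul]
    _ = ∑ _F ∈ powersetCard c s, ∑ i ∈ s, w i :=
        sum_congr rfl fun _ hF ↦ sum_sdiff (mem_powersetCard.mp hF).1
    _ = #(powersetCard c s) • ∑ i ∈ s, w i := sum_const _

end

theorem stmt_10_general {α : Type*} [DecidableEq α] {m k c : ℕ}
    (f : Fin m → Finset α → ℝ)
    (hmono : ∀ i, ∀ A B : Finset α, A ⊆ B → f i A ≤ f i B)
    (hsub : ∀ i, ∀ (A B : Finset α) (e : α), A ⊆ B → e ∉ B →
      f i (insert e B) - f i B ≤ f i (insert e A) - f i A)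
    (ℱ : Finset (Fin m)) (hℱ : ℱ.card = 2 * c)
    (V S O : Finset α) (hO : O ⊆ V) (hOcard : O.card = k)
    (hcover : ∀ i ∈ ℱ, f i (S ∪ O) = 1)
    (e : Finset (Fin m) → α)
    (hmax : ∀ F ∈ Finset.powersetCard c ℱ, ∀ e' ∈ V \ S,
      ∑ i ∈ F, (f i (insert e' S) - f i S) ≤
        ∑ i ∈ F, (f i (insert (e F) S) - f i S)) :
    (1 / ((Finset.powersetCard c ℱ).card : ℝ)) *
        ∑ F ∈ Finset.powersetCard c ℱ, ∑ i ∈ ℱ, (1 - f i (insert (e F) S)) ≤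
      (1 - 1 / (2 * (k : ℝ))) * ∑ i ∈ ℱ, (1 - f i S) := by
  set P := powersetCard c ℱ
  set D := ∑ i ∈ ℱ, (1 - f i S)
  have hP : (#P : ℝ) ≠ 0 := by
    rw [card_powersetCard, hℱ]
    exact_mod_cast (Nat.choose_pos (by omega)).ne'
  have hhalf : ∑ F ∈ P, ∑ i ∈ F, (1 - f i S) = #P / 2 * D := by
    have := two_nsmul_sum_powersetCard_sum hℱ fun i ↦ 1 - f i S
    rw [two_nsmul, nsmul_eq_mul] at this
    linarith
  calc 1 / (#P : ℝ) * ∑ F ∈ P, ∑ i ∈ ℱ, (1 - f i (insert (e F) S))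
      ≤ 1 / #P * ∑ F ∈ P, (D - (∑ i ∈ F, (1 - f i S)) / k) := by
        gcongr with F hF
        obtain ⟨hFℱ, -⟩ := mem_powersetCard.mp hF
        rw [← hOcard]
        exact sum_deficit_insert_le_of_greedy hFℱ f (fun i _ _ ↦ hmono i _ _) hsub
          (fun i hi ↦ hcover i (hFℱ hi))
          fun o ho ↦ hmax F hF o (sdiff_subset_sdiff hO le_rfl ho)
    _ = (1 - 1 / (2 * k)) * D := by
        rw [sum_sub_distrib, sum_const, nsmul_eq_mul, ← sum_div, hhalf]
        field_simp

/-- expected one-step decay for RandGr (Lemma 2). The expectation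
is the uniform average over all half-size subsets `F` of the unsatisfied
constraint set `ℱ`. -/
theorem stmt_10 {α : Type*} [Fintype α] [DecidableEq α] {m k c : ℕ}
    (hk : 0 < k)
    (f : Fin m → Finset α → ℝ)
    (hmono : ∀ i, ∀ A B : Finset α, A ⊆ B → f i A ≤ f i B)
    (hsub : ∀ i, ∀ (A B : Finset α) (e : α), A ⊆ B → e ∉ B →
      f i (insert e B) - f i B ≤ f i (insert e A) - f i A)
    (hrange : ∀ i, ∀ S : Finset α, 0 ≤ f i S ∧ f i S ≤ 1)
    (ℱ : Finset (Fin m)) (hℱ : ℱ.card = 2 * c)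
    (V S O : Finset α) (hS : S ⊆ V) (hO : O ⊆ V) (hOcard : O.card = k)
    (hcover : ∀ i ∈ ℱ, f i (S ∪ O) = 1)
    (e : Finset (Fin m) → α)
    (he : ∀ F ∈ Finset.powersetCard c ℱ, e F ∈ V \ S)
    (hmax : ∀ F ∈ Finset.powersetCard c ℱ, ∀ e' ∈ V \ S,
      ∑ i ∈ F, (f i (insert e' S) - f i S) ≤
        ∑ i ∈ F, (f i (insert (e F) S) - f i S)) :
    (1 / ((Finset.powersetCard c ℱ).card : ℝ)) *
        ∑ F ∈ Finset.powersetCard c ℱ, ∑ i ∈ ℱ, (1 - f i (insert (e F) S)) ≤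
      (1 - 1 / (2 * (k : ℝ))) * ∑ i ∈ ℱ, (1 - f i S) :=
  stmt_10_general f hmono hsub ℱ hℱ V S O hO hOcard hcover e hmax
end
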